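/- arXiv:1407.1900 — 7 statements merged into one kernel-verified Lean document; each statement's English description precedes it below -/
import Mathlib

section
/- Let c > 0 and let u : ℝ × ℝ → ℝ be twice continuously differentiable and satisfy the one-dimensional wave equation ∂ₜ∂ₜu(t,x) = c²·∂ₓ∂ₓu(t,x) for all (t,x) ∈ ℝ × ℝ, and suppose that the functions x ↦ u(0,x) and x ↦ ∂ₜu(0,x) belong to the Schwartz space 𝓢(ℝ, ℝ). Then for every v ∈ ℝ with |v| ≠ c, every x₀ ∈ ℝ and every non-negative integer l there is a constant C > 0 such that |∂ₜu(t, x₀ + v·t)|² + c²·|∂ₓu(t, x₀ + v·t)|² ≤ C·t^(−2l) for all t > 0. -/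
/-!
The Riemann invariants `∂ₜu ± c ∂ₓu` of the wave equation are transported along the characteristics
`x ± c t = const`, so on the ray `x = x₀ + v t` they equal the Schwartz functions `f₁ ± c f₀'`
evaluated at `x₀ + (v ± c) t`. Since `v ± c ≠ 0`, these points escape to infinity linearly in `t`,
so both invariants decay faster than any power of `t`; the energy density
`(∂ₜu)² + c² (∂ₓu)²` is half the sum of their squares.
-/

open MeasureTheory Real

namespace SchwartzMap

variable {E F : Type*} [NormedAddCommGroup E] [NormedSpace ℝ E]
  [NormedAddCommGroup F] [NormedSpace ℝ F]

theorem exists_one_add_norm_pow_mul_norm_le (g : 𝓢(E, F)) (l : ℕ) :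
    ∃ M > 0, ∀ y, (1 + ‖y‖) ^ l * ‖g y‖ ≤ M := by
  set S := (Finset.Iic (l, 0)).sup (fun m => SchwartzMap.seminorm ℝ m.1 m.2) g
  refine ⟨2 ^ l * S + 1, by positivity, fun y => ?_⟩
  have h := one_add_le_sup_seminorm_apply (𝕜 := ℝ) (m := (l, 0)) le_rfl le_rfl g y
  rw [norm_iteratedFDeriv_zero] at h
  linarith

theorem exists_norm_le_rpow_neg_along_ray (g : 𝓢(E, F)) (x₀ k : E) (hk : k ≠ 0) (l : ℕ) :
    ∃ C > 0, ∀ t > (0 : ℝ), ‖g (x₀ + t • k)‖ ≤ C * t ^ (-(l : ℝ)) := by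
  obtain ⟨M, hM, hgM⟩ := g.exists_one_add_norm_pow_mul_norm_le l
  have hk' : 0 < ‖k‖ := norm_pos_iff.mpr hk
  set a := (1 + ‖x₀‖) / ‖k‖
  refine ⟨a ^ l * M, by positivity, fun t ht => ?_⟩
  set y := x₀ + t • k
  have hty : t ≤ a * (1 + ‖y‖) := by
    have h1 : t * ‖k‖ ≤ ‖y‖ + ‖x₀‖ := by
      calc t * ‖k‖ = ‖y - x₀‖ := by simp [y, norm_smul, abs_of_pos ht]
        _ ≤ ‖y‖ + ‖x₀‖ := norm_sub_le _ _
    rw [div_mul_eq_mul_div, le_div_iff₀ hk']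
    nlinarith [norm_nonneg y, norm_nonneg x₀]
  have htl : t ^ l * ‖g y‖ ≤ a ^ l * M :=
    calc t ^ l * ‖g y‖ ≤ (a * (1 + ‖y‖)) ^ l * ‖g y‖ := by gcongr
      _ = a ^ l * ((1 + ‖y‖) ^ l * ‖g y‖) := by rw [mul_pow, mul_assoc]
      _ ≤ a ^ l * M := by gcongr; exact hgM y
  rw [rpow_neg ht.le, rpow_natCast, ← div_eq_mul_inv, le_div_iff₀ (by positivity), mul_comm]
  exact htl

end SchwartzMap

variable {F : Type*} [NormedAddCommGroup F] [NormedSpace ℝ F]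

theorem ContinuousLinearMap.apply_prod_eq (L : ℝ × ℝ →L[ℝ] F) (a b : ℝ) :
    L (a, b) = a • L (1, 0) + b • L (0, 1) := by
  rw [← map_smul, ← map_smul, ← map_add]
  simp

section PartialDerivatives

variable {u : ℝ × ℝ → F} {t x : ℝ}

theorem deriv_comp_prodMk_left_eq_fderiv (hu : DifferentiableAt ℝ u (t, x)) :
    deriv (fun s => u (s, x)) t = fderiv ℝ u (t, x) (1, 0) :=
  (hu.hasFDerivAt.comp_hasDerivAt t ((hasDerivAt_id t).prodMk (hasDerivAt_const t x))).deriv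

theorem deriv_comp_prodMk_right_eq_fderiv (hu : DifferentiableAt ℝ u (t, x)) :
    deriv (fun y => u (t, y)) x = fderiv ℝ u (t, x) (0, 1) :=
  (hu.hasFDerivAt.comp_hasDerivAt x ((hasDerivAt_const x t).prodMk (hasDerivAt_id x))).deriv

theorem fderiv_fderiv_apply_eq_fderiv_apply (hu : DifferentiableAt ℝ (fderiv ℝ u) (t, x))
    (v w : ℝ × ℝ) :
    fderiv ℝ (fun p => fderiv ℝ u p w) (t, x) v = fderiv ℝ (fderiv ℝ u) (t, x) v w := by
  rw [fderiv_clm_apply hu (differentiableAt_const w)]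
  simp

theorem deriv_deriv_comp_prodMk_left_eq_fderiv_fderiv (hu : Differentiable ℝ u)
    (hu' : DifferentiableAt ℝ (fderiv ℝ u) (t, x)) :
    deriv (fun s => deriv (fun s' => u (s', x)) s) t = fderiv ℝ (fderiv ℝ u) (t, x) (1, 0) (1, 0) := by
  simp_rw [deriv_comp_prodMk_left_eq_fderiv (hu _)]
  rw [deriv_comp_prodMk_left_eq_fderiv (hu'.clm_apply (differentiableAt_const _)),
    fderiv_fderiv_apply_eq_fderiv_apply hu']

theorem deriv_deriv_comp_prodMk_right_eq_fderiv_fderiv (hu : Differentiable ℝ u)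
    (hu' : DifferentiableAt ℝ (fderiv ℝ u) (t, x)) :
    deriv (fun y => deriv (fun y' => u (t, y')) y) x = fderiv ℝ (fderiv ℝ u) (t, x) (0, 1) (0, 1) := by
  simp_rw [deriv_comp_prodMk_right_eq_fderiv (hu _)]
  rw [deriv_comp_prodMk_right_eq_fderiv (hu'.clm_apply (differentiableAt_const _)),
    fderiv_fderiv_apply_eq_fderiv_apply hu']

end PartialDerivatives

section WaveEquation

variable {u : ℝ × ℝ → F} {c : ℝ}

/-- `fderiv ℝ u (t, x) (1, e)` is the Riemann invariant `∂ₜu + e ∂ₓu`; for `e = ± c` it is constant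
along the characteristic lines `x + e t = const`. -/
theorem fderiv_apply_eq_along_characteristic (hu : ContDiff ℝ 2 u)
    (hwave : ∀ t x : ℝ, deriv (fun s => deriv (fun s' => u (s', x)) s) t
      = c ^ 2 • deriv (fun y => deriv (fun y' => u (t, y')) y) x)
    {e : ℝ} (he : e ^ 2 = c ^ 2) (t x : ℝ) :
    fderiv ℝ u (t, x) (1, e) = fderiv ℝ u (0, x + e * t) (1, e) := by
  have hud : Differentiable ℝ u := hu.differentiable two_ne_zero
  have hud' : Differentiable ℝ (fderiv ℝ u) := (hu.fderiv_right le_rfl).differentiable one_ne_zero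
  have hwave' (p : ℝ × ℝ) : fderiv ℝ (fderiv ℝ u) p (1, 0) (1, 0)
      = c ^ 2 • fderiv ℝ (fderiv ℝ u) p (0, 1) (0, 1) := by
    rw [← deriv_deriv_comp_prodMk_left_eq_fderiv_fderiv hud (hud' p),
      ← deriv_deriv_comp_prodMk_right_eq_fderiv_fderiv hud (hud' p)]
    exact hwave p.1 p.2
  have hγ (s : ℝ) : HasDerivAt (fun s : ℝ => (s, x + e * t - e * s)) (1, -e) s :=
    (hasDerivAt_id s).prodMk (by simpa using ((hasDerivAt_id s).const_mul e).const_sub (x + e * t))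
  have hφ (s : ℝ) : HasDerivAt (fun s => fderiv ℝ u (s, x + e * t - e * s) (1, e)) 0 s := by
    set p : ℝ × ℝ := (s, x + e * t - e * s)
    have hsymm := (hu.contDiffAt (x := p)).isSymmSndFDerivAt (by simp) (1, 0) (0, 1)
    refine (((ContinuousLinearMap.apply ℝ F (1, e)).hasFDerivAt.comp p
      (hud' p).hasFDerivAt).comp_hasDerivAt s (hγ s)).congr_deriv ?_
    simp only [ContinuousLinearMap.comp_apply, ContinuousLinearMap.apply_apply]
    rw [ContinuousLinearMap.apply_prod_eq _ 1 (-e)]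
    simp only [add_apply, smul_apply]
    rw [ContinuousLinearMap.apply_prod_eq (fderiv ℝ (fderiv ℝ u) p (1, 0)),
      ContinuousLinearMap.apply_prod_eq (fderiv ℝ (fderiv ℝ u) p (0, 1)), hwave' p, hsymm]
    linear_combination (norm := module) he.symm • fderiv ℝ (fderiv ℝ u) p (0, 1) (0, 1)
  simpa using is_const_of_deriv_eq_zero (fun s => (hφ s).differentiableAt)
    (fun s => (hφ s).deriv) t 0

theorem fderiv_apply_eq_initialData (hu : ContDiff ℝ 2 u)
    (hwave : ∀ t x : ℝ, deriv (fun s => deriv (fun s' => u (s', x)) s) t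
      = c ^ 2 • deriv (fun y => deriv (fun y' => u (t, y')) y) x)
    {f₀ f₁ : ℝ → F} (h₀ : ∀ x, u (0, x) = f₀ x) (h₁ : ∀ x, deriv (fun s => u (s, x)) 0 = f₁ x)
    {e : ℝ} (he : e ^ 2 = c ^ 2) (t x : ℝ) :
    fderiv ℝ u (t, x) (1, e) = f₁ (x + e * t) + e • deriv f₀ (x + e * t) := by
  have hud : Differentiable ℝ u := hu.differentiable two_ne_zero
  rw [fderiv_apply_eq_along_characteristic hu hwave he, ContinuousLinearMap.apply_prod_eq,
    one_smul, ← deriv_comp_prodMk_left_eq_fderiv (hud _),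
    ← deriv_comp_prodMk_right_eq_fderiv (hud _), h₁, show (fun y => u (0, y)) = f₀ from funext h₀]

end WaveEquation

/-- Decay of the energy density of a solution of the 1-D wave
equation along any ray `x = x₀ + v t` with speed `|v| ≠ c`, assuming Schwartz
initial data. -/
theorem wave_equation_decay_along_noncharacteristic_rays
    (c : ℝ) (hc : 0 < c) (u : ℝ × ℝ → ℝ) (hu : ContDiff ℝ 2 u)
    (hwave : ∀ t x : ℝ,
      deriv (fun s => deriv (fun s' => u (s', x)) s) t
        = c ^ 2 * deriv (fun y => deriv (fun y' => u (t, y')) y) x)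
    (f₀ f₁ : SchwartzMap ℝ ℝ)
    (h₀ : ∀ x : ℝ, u (0, x) = f₀ x)
    (h₁ : ∀ x : ℝ, deriv (fun s => u (s, x)) 0 = f₁ x) :
    ∀ v : ℝ, |v| ≠ c → ∀ x₀ : ℝ, ∀ l : ℕ, ∃ C > 0, ∀ t > (0 : ℝ),
      |deriv (fun s => u (s, x₀ + v * t)) t| ^ 2
        + c ^ 2 * |deriv (fun y => u (t, y)) (x₀ + v * t)| ^ 2
        ≤ C * t ^ (-(2 * l : ℝ)) := by
  intro v hv x₀ l
  have hud : Differentiable ℝ u := hu.differentiable two_ne_zero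
  have hray (e : ℝ) (he : e ^ 2 = c ^ 2) (t : ℝ) :
      fderiv ℝ u (t, x₀ + v * t) (1, e)
        = (f₁ + e • SchwartzMap.derivCLM ℝ ℝ f₀) (x₀ + t • (v + e)) := by
    rw [fderiv_apply_eq_initialData hu (by simpa only [smul_eq_mul] using hwave) h₀ h₁ he]
    simp only [smul_eq_mul, add_apply, smul_apply, SchwartzMap.derivCLM_apply]
    ring_nf
  have hv_add (e : ℝ) (he : e ^ 2 = c ^ 2) : v + e ≠ 0 := by
    intro hve
    rw [eq_neg_of_add_eq_zero_left hve, abs_neg, ← abs_of_pos hc] at hv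
    exact hv (sq_eq_sq_iff_abs_eq_abs e c |>.mp he)
  obtain ⟨A, hA, hAt⟩ := (f₁ + c • SchwartzMap.derivCLM ℝ ℝ f₀).exists_norm_le_rpow_neg_along_ray
    x₀ (v + c) (hv_add c rfl) l
  obtain ⟨B, hB, hBt⟩ := (f₁ + (-c) • SchwartzMap.derivCLM ℝ ℝ f₀).exists_norm_le_rpow_neg_along_ray
    x₀ (v + -c) (hv_add (-c) (neg_sq c)) l
  refine ⟨(A ^ 2 + B ^ 2) / 2, by positivity, fun t ht => ?_⟩
  have hpow : (t ^ (-(l : ℝ))) ^ 2 = t ^ (-(2 * l : ℝ)) := by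
    rw [← rpow_natCast, ← rpow_mul ht.le]; ring_nf
  have hsum := hray c rfl t
  have hdiff := hray (-c) (neg_sq c) t
  rw [ContinuousLinearMap.apply_prod_eq, one_smul, smul_eq_mul] at hsum hdiff
  have ha := pow_le_pow_left₀ (norm_nonneg _) (hAt t ht) 2
  have hb := pow_le_pow_left₀ (norm_nonneg _) (hBt t ht) 2
  rw [← hsum, norm_eq_abs, sq_abs, mul_pow, hpow] at ha
  rw [← hdiff, norm_eq_abs, sq_abs, mul_pow, hpow] at hb
  rw [deriv_comp_prodMk_left_eq_fderiv (hud _), deriv_comp_prodMk_right_eq_fderiv (hud _), sq_abs,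
    sq_abs]
  linear_combination (ha + hb) / 2
end

section
/- Let J : ℝ → ℝ be integrable, real-valued and even, and set μ₀ = ∫ J(x) dx. Suppose u : ℝ → L²(ℝ, ℂ) is twice continuously differentiable and satisfies u''(t) + μ₀·u(t) = J ⋆ u(t) for all t ∈ ℝ. Then the energy E(t) = ‖u'(t)‖² + μ₀·‖u(t)‖² − ⟪J ⋆ u(t), u(t)⟫ is constant in t, where ‖·‖ and ⟪·,·⟫ denote the L² norm and inner product. -/
/-!
Convolution with `J` is realised on `L²` as the bounded operator `T v = ∫ J y • τ_y v dy`, a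
Bochner integral of translates; Fubini identifies `T v` with the pointwise convolution, and
`τ_y* = τ_{-y}` together with the evenness of `J` makes `T` symmetric. The equation then reads
`u'' = T u - μ₀ u`, and for a symmetric `T` the derivative of `‖u'‖² + μ₀ ‖u‖² - ⟪u, T u⟫` is
`2 ⟪u', u'' - T u + μ₀ u⟫ = 0`.
-/

open MeasureTheory Filter
open scoped ENNReal ComplexConjugate InnerProductSpace

theorem LinearMap.IsSymmetric.energy_conservation {F : Type*} [NormedAddCommGroup F]
    [InnerProductSpace ℝ F] {T : F →L[ℝ] F} (hT : (T : F →ₗ[ℝ] F).IsSymmetric) (c : ℝ)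
    {u u' : ℝ → F} (hu : ∀ t, HasDerivAt u (u' t) t)
    (hu' : ∀ t, HasDerivAt u' (T (u t) - c • u t) t) (t₁ t₂ : ℝ) :
    ‖u' t₁‖ ^ 2 + c * ‖u t₁‖ ^ 2 - ⟪u t₁, T (u t₁)⟫_ℝ
      = ‖u' t₂‖ ^ 2 + c * ‖u t₂‖ ^ 2 - ⟪u t₂, T (u t₂)⟫_ℝ := by
  have hE : ∀ t, HasDerivAt (fun s => ‖u' s‖ ^ 2 + c * ‖u s‖ ^ 2 - ⟪u s, T (u s)⟫_ℝ) 0 t := by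
    intro t
    have hTu : HasDerivAt (fun s => T (u s)) (T (u' t)) t :=
      T.hasFDerivAt.comp_hasDerivAt t (hu t)
    refine ((((hu' t).norm_sq).add (((hu t).norm_sq).const_mul c)).sub
      ((hu t).inner ℝ hTu)).congr_deriv ?_
    rw [inner_sub_right, real_inner_smul_right, ← ContinuousLinearMap.coe_coe T,
      ← hT (u t) (u' t), real_inner_comm (u t) (u' t), real_inner_comm _ (u' t)]
    ring
  exact is_const_of_deriv_eq_zero (fun t => (hE t).differentiableAt) (fun t => (hE t).deriv) t₁ t₂

-- The real inner product instance on `Lp ℂ 2 μ` is the `L²` product built from the real inner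
-- product of `ℂ`, not the real part of the complex one; the two agree only propositionally.
theorem MeasureTheory.L2.real_inner_eq_re_inner {α : Type*} [MeasurableSpace α]
    {μ : Measure α} (f g : Lp ℂ 2 μ) : ⟪f, g⟫_ℝ = (⟪f, g⟫_ℂ).re := by
  rw [L2.inner_def, L2.inner_def, ← RCLike.re_to_complex, ← integral_re (L2.integrable_inner f g)]
  rfl

namespace MeasureTheory.Lp

local notation "L²(" F ")" => Lp F 2 (volume : Measure ℝ)

variable {E : Type*} [NormedAddCommGroup E] [NormedSpace ℂ E] {p : ℝ≥0∞} [Fact (1 ≤ p)]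

noncomputable def translate (y : ℝ) :
    Lp E p (volume : Measure ℝ) →ₗᵢ[ℂ] Lp E p (volume : Measure ℝ) :=
  compMeasurePreservingₗᵢ ℂ (· - y) (measurePreserving_sub_right volume y)

theorem coeFn_translate (y : ℝ) (v : Lp E p (volume : Measure ℝ)) :
    translate y v =ᵐ[volume] fun x => v (x - y) :=
  coeFn_compMeasurePreserving v _

theorem translate_translate_neg (y : ℝ) (v : Lp E p (volume : Measure ℝ)) :
    translate y (translate (-y) v) = v := by
  have h_id : ∀ (f : ℝ → ℝ) (hf : MeasurePreserving f volume volume), f = id →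
      compMeasurePreserving f hf v = v := by
    rintro f hf rfl
    exact compMeasurePreserving_id_apply v
  refine (compMeasurePreserving_comp_apply v _ _).symm.trans (h_id _ _ ?_)
  ext x
  simp

theorem continuous_translate (hp : p ≠ ∞) (v : Lp E p (volume : Measure ℝ)) :
    Continuous fun y : ℝ => translate y v :=
  continuous_const.compMeasurePreservingLp
    (g := fun y : ℝ => (ContinuousMap.mk (fun q : ℝ × ℝ => q.2 - q.1) (by fun_prop)).curry y)
    (ContinuousMap.continuous _) (fun y => measurePreserving_sub_right volume y) hp

theorem inner_translate_left {F : Type*} [NormedAddCommGroup F] [InnerProductSpace ℂ F]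
    (y : ℝ) (a b : L²(F)) : ⟪translate y a, b⟫_ℂ = ⟪a, translate (-y) b⟫_ℂ := by
  conv_lhs => rw [← translate_translate_neg y b]
  exact (translate y).inner_map_map a _

variable {J : ℝ → ℝ}

theorem integrable_smul_translate (hp : p ≠ ∞) (hJ : Integrable J)
    (v : Lp E p (volume : Measure ℝ)) : Integrable (fun y => J y • translate y v) volume := by
  refine (hJ.norm.mul_const ‖v‖).mono'
    (hJ.aestronglyMeasurable.smul (continuous_translate hp v).aestronglyMeasurable)
    (Eventually.of_forall fun y => ?_)
  rw [norm_smul, (translate y).norm_map]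

noncomputable def convolutionCLM (hp : p ≠ ∞) (hJ : Integrable J) :
    Lp E p (volume : Measure ℝ) →L[ℂ] Lp E p (volume : Measure ℝ) :=
  LinearMap.mkContinuous
    { toFun := fun v => ∫ y, J y • translate y v
      map_add' := fun v w => by
        simp only [map_add, smul_add]
        exact integral_add (integrable_smul_translate hp hJ v) (integrable_smul_translate hp hJ w)
      map_smul' := fun c v => by
        simp only [map_smul, smul_comm _ c, RingHom.id_apply]
        exact integral_smul c _ }
    (∫ y, ‖J y‖)
    (fun v => by
      refine (norm_integral_le_integral_norm _).trans_eq ?_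
      simp only [norm_smul, LinearIsometry.norm_map]
      exact integral_mul_const _ _)

theorem convolutionCLM_apply (hp : p ≠ ∞) (hJ : Integrable J) (v : Lp E p (volume : Measure ℝ)) :
    convolutionCLM hp hJ v = ∫ y, J y • translate y v :=
  rfl

section InnerProduct

variable {F : Type*} [NormedAddCommGroup F] [InnerProductSpace ℂ F] [CompleteSpace F]

theorem inner_convolutionCLM_right (hJ : Integrable J) (g v : L²(F)) :
    ⟪g, convolutionCLM ENNReal.ofNat_ne_top hJ v⟫_ℂ = ∫ y, (J y : ℂ) * ⟪g, translate y v⟫_ℂ := by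
  rw [convolutionCLM_apply, ← integral_inner (integrable_smul_translate ENNReal.ofNat_ne_top hJ v)]
  simp only [RCLike.real_smul_eq_coe_smul (K := ℂ), inner_smul_right,
    RCLike.ofReal_eq_complex_ofReal]

theorem convolutionCLM_isSymmetric (hJ : Integrable J) (hJeven : ∀ x, J (-x) = J x) :
    ((convolutionCLM ENNReal.ofNat_ne_top hJ : L²(F) →L[ℂ] L²(F)) :
      L²(F) →ₗ[ℂ] L²(F)).IsSymmetric := by
  intro a b
  rw [ContinuousLinearMap.coe_coe, ← inner_conj_symm, inner_convolutionCLM_right, ← integral_conj,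
    inner_convolutionCLM_right]
  calc ∫ y, conj ((J y : ℂ) * ⟪b, translate y a⟫_ℂ)
      = ∫ y, (J (-y) : ℂ) * ⟪a, translate (-y) b⟫_ℂ := by
        simp only [map_mul, Complex.conj_ofReal, inner_conj_symm, inner_translate_left, hJeven]
    _ = ∫ y, (J y : ℂ) * ⟪a, translate y b⟫_ℂ :=
        integral_neg_eq_self (fun y => (J y : ℂ) * ⟪a, translate y b⟫_ℂ) volume

end InnerProduct

theorem integrable_conj_mul_mul_sub (hJ : Integrable J) (g v : L²(ℂ)) :
    Integrable (fun q : ℝ × ℝ => conj (g q.1) * ((J q.2 : ℂ) * v (q.1 - q.2)))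
      (volume.prod volume) := by
  have hsq : ∀ w : L²(ℂ), Integrable (fun x => ‖w x‖ ^ 2) volume := fun w =>
    (memLp_two_iff_integrable_sq_norm (Lp.aestronglyMeasurable w)).1 (Lp.memLp w)
  have hshear := measurePreserving_sub_prod (volume : Measure ℝ) volume
  have hm : AEStronglyMeasurable
      (fun q : ℝ × ℝ => conj (g q.1) * ((J q.2 : ℂ) * v (q.1 - q.2))) (volume.prod volume) :=
    (Lp.aestronglyMeasurable g).star.comp_fst.mul
      ((Complex.continuous_ofReal.comp_aestronglyMeasurable hJ.aestronglyMeasurable).comp_snd.mul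
        ((Lp.aestronglyMeasurable v).comp_fst.comp_measurePreserving hshear))
  -- `|g x| |v (x - y)| ≤ |g x|² + |v (x - y)|²`, and both terms are integrable against `|J y|`
  refine (((hsq g).mul_prod hJ.norm).add
    (hshear.integrable_comp_of_integrable ((hsq v).mul_prod hJ.norm))).mono' hm
    (Eventually.of_forall fun q => ?_)
  simp only [norm_mul, Complex.norm_conj, Complex.norm_real, Pi.add_apply, Function.comp_apply]
  have hg := norm_nonneg (g q.1)
  have hv := norm_nonneg (v (q.1 - q.2))
  have hJq := norm_nonneg (J q.2)
  nlinarith [mul_nonneg hJq (sq_nonneg (‖g q.1‖ - ‖v (q.1 - q.2)‖)),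
    mul_nonneg hJq (mul_nonneg hg hv)]

theorem inner_convolutionCLM_eq_integral (hJ : Integrable J) (g v : L²(ℂ)) :
    ⟪g, convolutionCLM ENNReal.ofNat_ne_top hJ v⟫_ℂ
      = ∫ x, conj (g x) * ∫ y, (J (x - y) : ℂ) * v y := by
  calc ⟪g, convolutionCLM ENNReal.ofNat_ne_top hJ v⟫_ℂ
      = ∫ y, ∫ x, conj (g x) * ((J y : ℂ) * v (x - y)) := by
        rw [inner_convolutionCLM_right]
        refine integral_congr_ae (Eventually.of_forall fun y => ?_)
        simp only [L2.inner_def, ← integral_const_mul]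
        refine integral_congr_ae ?_
        filter_upwards [coeFn_translate y v] with x hx
        simp only [hx, RCLike.inner_apply']
        ring
    _ = ∫ x, ∫ y, conj (g x) * ((J y : ℂ) * v (x - y)) :=
        (integral_integral_swap (integrable_conj_mul_mul_sub hJ g v)).symm
    _ = ∫ x, conj (g x) * ∫ y, (J (x - y) : ℂ) * v y := by
        refine integral_congr_ae (Eventually.of_forall fun x => ?_)
        simp only [integral_const_mul]
        congr 1
        simpa using integral_sub_left_eq_self (fun y => (J (x - y) : ℂ) * v y) volume x

theorem convolutionCLM_eq_of_ae_eq (hJ : Integrable J) {v w : L²(ℂ)}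
    (hw : w =ᵐ[volume] fun x => ∫ y, (J (x - y) : ℂ) * v y) :
    convolutionCLM ENNReal.ofNat_ne_top hJ v = w := by
  refine ext_inner_left ℂ fun g => ?_
  rw [inner_convolutionCLM_eq_integral, L2.inner_def]
  refine integral_congr_ae ?_
  filter_upwards [hw] with x hx
  rw [hx, RCLike.inner_apply']

end MeasureTheory.Lp

open MeasureTheory.Lp in
/-- Conservation of energy for the peridynamic evolution:
if `u : ℝ → L²(ℝ, ℂ)` is twice continuously differentiable and satisfies
`u'' + μ₀ u = J ⋆ u` (pointwise a.e., with `μ₀ = ∫ J`, `J` integrable, real and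
even), then the energy
`E(t) = ‖u'(t)‖² + μ₀ ‖u(t)‖² − ⟪J ⋆ u(t), u(t)⟫` is constant. -/
theorem peridynamics_energy_conservation
    (J : ℝ → ℝ) (hJ : Integrable J) (hJeven : ∀ x, J (-x) = J x)
    (u : ℝ → Lp ℂ 2 (volume : Measure ℝ)) (hu : ContDiff ℝ 2 u)
    (heq : ∀ t : ℝ, ∀ᵐ x : ℝ ∂volume,
      (deriv (deriv u) t) x + ((∫ y : ℝ, J y : ℝ) : ℂ) * (u t) x
        = ∫ y : ℝ, (J (x - y) : ℂ) * (u t) y) :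
    ∀ t₁ t₂ : ℝ,
      ‖deriv u t₁‖ ^ 2 + (∫ y : ℝ, J y) * ‖u t₁‖ ^ 2
          - (∫ x : ℝ, (∫ y : ℝ, (J (x - y) : ℂ) * (u t₁) y)
              * (starRingEnd ℂ) ((u t₁) x)).re
        = ‖deriv u t₂‖ ^ 2 + (∫ y : ℝ, J y) * ‖u t₂‖ ^ 2
          - (∫ x : ℝ, (∫ y : ℝ, (J (x - y) : ℂ) * (u t₂) y)
              * (starRingEnd ℂ) ((u t₂) x)).re := by
  set T := convolutionCLM (E := ℂ) (p := 2) ENNReal.ofNat_ne_top hJ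
  set μ₀ := ∫ y, J y
  have hT : ∀ t, T (u t) = deriv (deriv u) t + μ₀ • u t := fun t =>
    convolutionCLM_eq_of_ae_eq hJ <| by
      filter_upwards [heq t, Lp.coeFn_add (deriv (deriv u) t) (μ₀ • u t),
        Lp.coeFn_smul μ₀ (u t)] with x hx hadd hsmul
      rw [hadd, Pi.add_apply, hsmul, Pi.smul_apply, ← hx, Complex.real_smul]
  have hTsymm :
      ((T.restrictScalars ℝ : _ →L[ℝ] _) : Lp ℂ 2 (volume : Measure ℝ) →ₗ[ℝ] _).IsSymmetric :=
    fun a b => by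
      simp only [ContinuousLinearMap.coe_coe, ContinuousLinearMap.coe_restrictScalars',
        L2.real_inner_eq_re_inner]
      exact congrArg Complex.re (convolutionCLM_isSymmetric hJ hJeven a b)
  have hdu : Differentiable ℝ (deriv u) := by
    simpa [iteratedDeriv_one] using hu.differentiable_iteratedDeriv 1 (by norm_num)
  have hu' : ∀ t, HasDerivAt (deriv u) (T (u t) - μ₀ • u t) t := fun t => by
    rw [hT, add_sub_cancel_right]
    exact (hdu t).hasDerivAt
  have hpot : ∀ t, ⟪u t, T (u t)⟫_ℝ
      = (∫ x, (∫ y, (J (x - y) : ℂ) * u t y) * conj (u t x)).re := fun t => by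
    rw [L2.real_inner_eq_re_inner, inner_convolutionCLM_eq_integral]
    simp_rw [mul_comm]
  intro t₁ t₂
  rw [← hpot, ← hpot]
  exact hTsymm.energy_conservation μ₀
    (fun t => (hu.differentiable (by norm_num) t).hasDerivAt) hu' t₁ t₂
end

section
/- Let J : ℝ → ℝ be integrable, nonnegative, even, not almost everywhere zero, and suppose ∫ x²·J(x) dx < ∞. Define φ(ξ) = μ₀ − (𝓕J)(ξ). Then φ(0) = 0, φ is differentiable at 0 with φ'(0) = 0, φ(ξ) ≥ 0 for all ξ ∈ ℝ, and φ(ξ) > 0 for every ξ ≠ 0. -/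
open MeasureTheory Real FourierTransform

/-- The `k`-th moment `μ_k = ∫ x^k J(x) dx` of `J`. -/
noncomputable def momentJ (J : ℝ → ℝ) (k : ℕ) : ℝ := ∫ x : ℝ, x ^ k * J x

/-- `φ(ξ) = μ₀ − (𝓕J)(ξ)`; since `J` is real and even, `𝓕J` is real-valued,
so we record `φ` through the real part of the Fourier transform. -/
noncomputable def phiJ (J : ℝ → ℝ) (ξ : ℝ) : ℝ :=
  momentJ J 0 - (𝓕 (fun x : ℝ => (J x : ℂ)) ξ).re

/-- The wave speed `c = √(μ₂/2)`. -/
noncomputable def speedJ (J : ℝ → ℝ) : ℝ := Real.sqrt (momentJ J 2 / 2)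

/-- `ψ(ξ) = sign(ξ)·√(2 φ(ξ)/φ''(0))`, where `φ''(0) = 4π²μ₂`. -/
noncomputable def psiJ (J : ℝ → ℝ) (ξ : ℝ) : ℝ :=
  Real.sign ξ * Real.sqrt (2 * phiJ J ξ / (4 * Real.pi ^ 2 * momentJ J 2))

/-- `s(t,ξ) = sin(2πcψ(ξ)t)/(2πcψ(ξ))`, interpreted as `t` when `ψ(ξ) = 0`. -/
noncomputable def skerJ (J : ℝ → ℝ) (t ξ : ℝ) : ℝ :=
  if psiJ J ξ = 0 then t
  else Real.sin (2 * Real.pi * speedJ J * psiJ J ξ * t) / (2 * Real.pi * speedJ J * psiJ J ξ)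

/-- The Fourier representation of the solution of `u_tt + μ₀ u = J ⋆ u` with
initial data `u(0,·) = u₀`, `∂ₜu(0,·) = u₁`. -/
noncomputable def usolJ (J : ℝ → ℝ) (u₀ u₁ : SchwartzMap ℝ ℂ) (t x : ℝ) : ℂ :=
  ∫ ξ : ℝ, Complex.exp (2 * Real.pi * Complex.I * ξ * x) *
    ((Real.cos (2 * Real.pi * speedJ J * psiJ J ξ * t) : ℂ) * 𝓕 (u₀ : ℝ → ℂ) ξ
      + (skerJ J t ξ : ℂ) * 𝓕 (u₁ : ℝ → ℂ) ξ)

/-- The Fourier representation of `D u`, where `D` is the Fourier multiplier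
with symbol `2πi ψ(ξ)`. -/
noncomputable def DusolJ (J : ℝ → ℝ) (u₀ u₁ : SchwartzMap ℝ ℂ) (t x : ℝ) : ℂ :=
  ∫ ξ : ℝ, Complex.exp (2 * Real.pi * Complex.I * ξ * x) *
    (2 * Real.pi * Complex.I * (psiJ J ξ : ℂ)) *
    ((Real.cos (2 * Real.pi * speedJ J * psiJ J ξ * t) : ℂ) * 𝓕 (u₀ : ℝ → ℂ) ξ
      + (skerJ J t ξ : ℂ) * 𝓕 (u₁ : ℝ → ℂ) ξ)

/-!
Writing `𝓕J` out, `φ(ξ) = ∫ (1 - cos (2π x ξ)) J(x) dx`. The integrand is nonnegative, and for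
`ξ ≠ 0` the factor `1 - cos (2π x ξ)` vanishes only on a countable set, so `φ(ξ) = 0` would force
`J = 0` almost everywhere. Flatness at the origin comes from `1 - cos t ≤ t² / 2`, which gives
`0 ≤ φ(ξ) ≤ 2π² μ₂ ξ²`.
-/

open Asymptotics Filter Topology

lemma hasDerivAt_zero_of_abs_le_mul_sq {f : ℝ → ℝ} {C : ℝ} (hf : ∀ x, |f x| ≤ C * x ^ 2) :
    HasDerivAt f 0 0 := by
  have hf0 : f 0 = 0 := abs_nonpos_iff.mp (by simpa using hf 0)
  have hO : f =O[𝓝 0] fun x => x ^ 2 :=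
    .of_bound C <| .of_forall fun x => by
      simpa [Real.norm_eq_abs, abs_of_nonneg (sq_nonneg x)] using hf x
  rw [hasDerivAt_iff_isLittleO_nhds_zero]
  simpa [hf0] using hO.trans_isLittleO (isLittleO_pow_id one_lt_two)

lemma ae_cos_ne_one {ξ : ℝ} (hξ : ξ ≠ 0) : ∀ᵐ x : ℝ, cos (2 * π * x * ξ) ≠ 1 := by
  refine measure_eq_zero_iff_ae_notMem.mp (Set.Countable.measure_zero ?_ _)
  refine (Set.countable_range fun n : ℤ => (n : ℝ) / ξ).mono fun x hx => ?_
  obtain ⟨n, hn⟩ := (cos_eq_one_iff _).mp hx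
  have hnx : (n : ℝ) = x * ξ := mul_right_cancel₀ two_pi_pos.ne' (hn.trans (by ring))
  exact ⟨n, show (n : ℝ) / ξ = x by rw [hnx, mul_div_cancel_right₀ x hξ]⟩

lemma integrable_cos_mul {f : ℝ → ℝ} (hf : Integrable f) (ξ : ℝ) :
    Integrable fun x => cos (2 * π * x * ξ) * f x :=
  hf.bdd_mul (by fun_prop) (.of_forall fun _ => abs_cos_le_one _)

lemma re_fourier_ofReal {f : ℝ → ℝ} (hf : Integrable f) (ξ : ℝ) :
    (𝓕 (fun x => (f x : ℂ)) ξ).re = ∫ x, cos (2 * π * x * ξ) * f x := by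
  have hint : Integrable fun v : ℝ => 𝐞 (-(v * ξ)) • (f v : ℂ) := by
    simpa [mul_comm] using (Real.fourierIntegral_convergent_iff (μ := volume) ξ).2 hf.ofReal
  rw [Real.fourier_real_eq, ← RCLike.re_to_complex, ← integral_re hint]
  refine integral_congr_ae (.of_forall fun x => ?_)
  simp only [Circle.smul_def, Real.fourierChar_apply, RCLike.re_to_complex, smul_eq_mul,
    Complex.mul_re, Complex.exp_ofReal_mul_I_re, Complex.ofReal_re, Complex.ofReal_im,
    mul_zero, sub_zero]
  rw [show 2 * π * -(x * ξ) = -(2 * π * x * ξ) by ring, cos_neg]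

section phiJ

variable {J : ℝ → ℝ}

lemma phiJ_eq_integral (hJ : Integrable J) (ξ : ℝ) :
    phiJ J ξ = ∫ x, (1 - cos (2 * π * x * ξ)) * J x := by
  simp only [phiJ, momentJ, pow_zero, one_mul, re_fourier_ofReal hJ, sub_mul,
    integral_sub hJ (integrable_cos_mul hJ ξ)]

lemma integrable_one_sub_cos_mul (hJ : Integrable J) (ξ : ℝ) :
    Integrable fun x => (1 - cos (2 * π * x * ξ)) * J x := by
  simpa only [sub_mul, one_mul, Pi.sub_def] using hJ.sub (integrable_cos_mul hJ ξ)

lemma one_sub_cos_mul_nonneg (hJ : ∀ x, 0 ≤ J x) (ξ x : ℝ) :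
    0 ≤ (1 - cos (2 * π * x * ξ)) * J x :=
  mul_nonneg (sub_nonneg.mpr (cos_le_one _)) (hJ x)

lemma phiJ_nonneg (hJint : Integrable J) (hJ : ∀ x, 0 ≤ J x) (ξ : ℝ) : 0 ≤ phiJ J ξ := by
  rw [phiJ_eq_integral hJint]
  exact integral_nonneg (one_sub_cos_mul_nonneg hJ ξ)

lemma phiJ_le (hJint : Integrable J) (hJ : ∀ x, 0 ≤ J x)
    (hmom2 : Integrable fun x => x ^ 2 * J x) (ξ : ℝ) :
    phiJ J ξ ≤ 2 * π ^ 2 * momentJ J 2 * ξ ^ 2 := by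
  calc phiJ J ξ = ∫ x, (1 - cos (2 * π * x * ξ)) * J x := phiJ_eq_integral hJint ξ
    _ ≤ ∫ x, 2 * π ^ 2 * ξ ^ 2 * (x ^ 2 * J x) := by
      refine integral_mono (integrable_one_sub_cos_mul hJint ξ) (hmom2.const_mul _) fun x => ?_
      have := one_sub_sq_div_two_le_cos (x := 2 * π * x * ξ)
      nlinarith [hJ x]
    _ = 2 * π ^ 2 * momentJ J 2 * ξ ^ 2 := by
      rw [integral_const_mul, momentJ]; ring

lemma phiJ_pos (hJint : Integrable J) (hJ : ∀ x, 0 ≤ J x) (hJne : ¬ ∀ᵐ x, J x = 0)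
    {ξ : ℝ} (hξ : ξ ≠ 0) : 0 < phiJ J ξ := by
  refine (phiJ_nonneg hJint hJ ξ).lt_of_ne' fun hzero => hJne ?_
  rw [phiJ_eq_integral hJint, integral_eq_zero_iff_of_nonneg
    (one_sub_cos_mul_nonneg hJ ξ) (integrable_one_sub_cos_mul hJint ξ)] at hzero
  filter_upwards [hzero, ae_cos_ne_one hξ] with x hx hcos_ne
  exact (mul_eq_zero.mp hx).resolve_left (sub_ne_zero.mpr hcos_ne.symm)

end phiJ

theorem phiJ_nonneg_and_positive_general
    (J : ℝ → ℝ) (hJint : Integrable J) (hJnonneg : ∀ x, 0 ≤ J x)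
    (hJne : ¬ (∀ᵐ x : ℝ ∂volume, J x = 0))
    (hmom2 : Integrable (fun x : ℝ => x ^ 2 * J x)) :
    phiJ J 0 = 0 ∧ HasDerivAt (phiJ J) 0 0 ∧ (∀ ξ : ℝ, 0 ≤ phiJ J ξ) ∧
      ∀ ξ : ℝ, ξ ≠ 0 → 0 < phiJ J ξ := by
  have hnonneg := phiJ_nonneg hJint hJnonneg
  have hle := phiJ_le hJint hJnonneg hmom2
  have hbound (ξ : ℝ) : |phiJ J ξ| ≤ 2 * π ^ 2 * momentJ J 2 * ξ ^ 2 :=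
    (abs_of_nonneg (hnonneg ξ)).trans_le (hle ξ)
  exact ⟨le_antisymm (by simpa using hle 0) (hnonneg 0), hasDerivAt_zero_of_abs_le_mul_sq hbound,
    hnonneg, fun _ hξ => phiJ_pos hJint hJnonneg hJne hξ⟩

/-- Basic properties of the symbol `φ = μ₀ − 𝓕J`:
it vanishes to second order at the origin and is strictly positive away from it. -/
theorem phiJ_nonneg_and_positive
    (J : ℝ → ℝ) (hJint : Integrable J) (hJnonneg : ∀ x, 0 ≤ J x)
    (hJeven : ∀ x, J (-x) = J x) (hJne : ¬ (∀ᵐ x : ℝ ∂volume, J x = 0))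
    (hmom2 : Integrable (fun x : ℝ => x ^ 2 * J x)) :
    phiJ J 0 = 0 ∧ HasDerivAt (phiJ J) 0 0 ∧ (∀ ξ : ℝ, 0 ≤ phiJ J ξ) ∧
      ∀ ξ : ℝ, ξ ≠ 0 → 0 < phiJ J ξ :=
  phiJ_nonneg_and_positive_general J hJint hJnonneg hJne hmom2
end

section
/- Let l ≥ 0 be an integer, δ > 0, M > 0, and let s : ℝ → ℝ be (l+1)-times continuously differentiable with s'(ξ) ≥ δ for all ξ ∈ ℝ and |s^(k)(ξ)| ≤ M for all ξ ∈ ℝ and all 2 ≤ k ≤ l + 1. Then for every Schwartz function g ∈ 𝓢(ℝ, ℂ) there is a constant C such that |∫ g(ξ)·e^(2πi·t·s(ξ)) dξ| ≤ C·t^(−l) for all t > 0. -/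
/-!
Since `s' ≥ δ > 0`, the oscillating factor is `e^{2πits} = (2πit s')⁻¹ (e^{2πits})'`, so an
integration by parts trades `∫ h e^{2πits}` for `-(2πit)⁻¹ ∫ (h / s')' e^{2πits}`, gaining a factor
`t⁻¹`. This can be repeated `l` times: `s' ≥ δ` and the bounds on `s^{(k)}`, `2 ≤ k ≤ l + 1`, give
bounds on the first `l` derivatives of `1 / s'`, so dividing by `s'` and differentiating keep the
amplitude in the class of functions whose derivatives are dominated by the integrable weight
`(1 + ξ²)⁻¹`, to which every Schwartz function belongs.
-/

open MeasureTheory Real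

def ContDiffDominated {F : Type*} [NormedAddCommGroup F] [NormedSpace ℝ F]
    (n : ℕ) (w : ℝ → ℝ) (f : ℝ → F) : Prop :=
  ContDiff ℝ n f ∧ ∃ C, ∀ k ≤ n, ∀ x, ‖iteratedDeriv k f x‖ ≤ C * w x

namespace ContDiffDominated

variable {F : Type*} [NormedAddCommGroup F] [NormedSpace ℝ F]
  {n m : ℕ} {w w₁ w₂ : ℝ → ℝ} {f : ℝ → F}

theorem mono (hf : ContDiffDominated n w f) (hmn : m ≤ n) : ContDiffDominated m w f :=
  ⟨hf.1.of_le (mod_cast hmn), hf.2.imp fun _ hC k hk => hC k (hk.trans hmn)⟩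

theorem norm_le (hf : ContDiffDominated n w f) : ∃ C, ∀ x, ‖f x‖ ≤ C * w x :=
  hf.2.imp fun _ hC x => by simpa using hC 0 n.zero_le x

theorem neg (hf : ContDiffDominated n w f) : ContDiffDominated n w (-f) :=
  ⟨hf.1.neg, hf.2.imp fun _ hC k hk x => by simpa using hC k hk x⟩

theorem deriv (hf : ContDiffDominated (n + 1) w f) : ContDiffDominated n w (_root_.deriv f) :=
  ⟨hf.1.deriv', hf.2.imp fun _ hC k hk x => by
    simpa only [iteratedDeriv_succ'] using hC (k + 1) (by omega) x⟩

theorem of_deriv (hw : 0 ≤ w) (hf : Differentiable ℝ f) (h₀ : ∃ C, ∀ x, ‖f x‖ ≤ C * w x)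
    (hf' : ContDiffDominated n w (_root_.deriv f)) : ContDiffDominated (n + 1) w f := by
  obtain ⟨C₀, hC₀⟩ := h₀
  obtain ⟨C₁, hC₁⟩ := hf'.2
  refine ⟨contDiff_succ_iff_deriv.2 ⟨hf, by simp, hf'.1⟩, max C₀ C₁, fun k hk x => ?_⟩
  rcases k with _ | k
  · simpa using (hC₀ x).trans (by gcongr; exacts [hw x, le_max_left _ _])
  · rw [iteratedDeriv_succ']
    exact (hC₁ k (by omega) x).trans (by gcongr; exacts [hw x, le_max_right _ _])

theorem smul {f : ℝ → ℝ} {g : ℝ → F} (hf : ContDiffDominated n w₁ f)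
    (hg : ContDiffDominated n w₂ g) : ContDiffDominated n (w₁ * w₂) fun x => f x • g x := by
  obtain ⟨C₁, hC₁⟩ := hf.2
  obtain ⟨C₂, hC₂⟩ := hg.2
  refine ⟨hf.1.smul hg.1, 2 ^ n * C₁ * C₂, fun k hk x => ?_⟩
  have hf₀ : 0 ≤ C₁ * w₁ x := (norm_nonneg _).trans (hC₁ 0 n.zero_le x)
  have hg₀ : 0 ≤ C₂ * w₂ x := (norm_nonneg _).trans (hC₂ 0 n.zero_le x)
  rw [← norm_iteratedFDeriv_eq_norm_iteratedDeriv]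
  calc ‖iteratedFDeriv ℝ k (fun y => f y • g y) x‖
      ≤ ∑ i ∈ Finset.range (k + 1), (k.choose i : ℝ) *
          ‖iteratedFDeriv ℝ i f x‖ * ‖iteratedFDeriv ℝ (k - i) g x‖ :=
        norm_iteratedFDeriv_smul_le hf.1 hg.1 x (mod_cast hk)
    _ ≤ ∑ i ∈ Finset.range (k + 1), (k.choose i : ℝ) * (C₁ * w₁ x) * (C₂ * w₂ x) := by
        gcongr with i hi
        · simpa [norm_iteratedFDeriv_eq_norm_iteratedDeriv] using
            hC₁ i ((Finset.mem_range_succ_iff.1 hi).trans hk) x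
        · simpa [norm_iteratedFDeriv_eq_norm_iteratedDeriv] using hC₂ (k - i) (by omega) x
    _ = 2 ^ k * (C₁ * w₁ x) * (C₂ * w₂ x) := by
        rw [← Finset.sum_mul, ← Finset.sum_mul, ← Nat.cast_sum, k.sum_range_choose]
        push_cast; ring
    _ ≤ 2 ^ n * (C₁ * w₁ x) * (C₂ * w₂ x) := by
        gcongr; norm_num
    _ = 2 ^ n * C₁ * C₂ * (w₁ * w₂) x := by simp only [Pi.mul_apply]; ring

end ContDiffDominated

theorem contDiffDominated_inv {f : ℝ → ℝ} {n : ℕ} {δ M : ℝ} (hf : ContDiff ℝ n f) (hδ : 0 < δ)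
    (hlow : ∀ x, δ ≤ |f x|) (hM : ∀ k, 1 ≤ k → k ≤ n → ∀ x, |iteratedDeriv k f x| ≤ M) :
    ContDiffDominated n 1 fun x => (f x)⁻¹ := by
  have hf₀ : ∀ x, f x ≠ 0 := fun x => abs_pos.1 (hδ.trans_le (hlow x))
  have hbound : ∀ x, ‖(f x)⁻¹‖ ≤ δ⁻¹ * (1 : ℝ → ℝ) x := fun x => by
    simpa using inv_anti₀ hδ (hlow x)
  induction n with
  | zero =>
    refine ⟨hf.inv hf₀, δ⁻¹, fun k hk x => ?_⟩
    obtain rfl : k = 0 := by omega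
    simpa using hbound x
  | succ n ih =>
    have hinv : ContDiffDominated n 1 fun x => (f x)⁻¹ :=
      ih (hf.of_le (mod_cast n.le_succ)) fun k hk₁ hk => hM k hk₁ (hk.trans n.le_succ)
    have hf' : ContDiffDominated n 1 (deriv f) :=
      ⟨hf.deriv', M, fun k hk x => by
        simpa [← iteratedDeriv_succ'] using hM (k + 1) (by omega) (by omega) x⟩
    have hdiff : Differentiable ℝ f := hf.differentiable (by simp)
    have hderiv : deriv (fun x => (f x)⁻¹) = -fun x => deriv f x • ((f x)⁻¹ • (f x)⁻¹) := by
      funext x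
      rw [deriv_fun_inv'' (hdiff x) (hf₀ x)]
      simp only [Pi.neg_apply, smul_eq_mul]
      field_simp
    refine .of_deriv (fun _ => zero_le_one) (hdiff.inv hf₀) ⟨δ⁻¹, hbound⟩ ?_
    rw [hderiv]
    simpa using (hf'.smul (hinv.smul hinv)).neg

theorem SchwartzMap.contDiffDominated {F : Type*} [NormedAddCommGroup F] [NormedSpace ℝ F]
    (g : SchwartzMap ℝ F) (n : ℕ) : ContDiffDominated n (fun x => (1 + x ^ 2)⁻¹) g := by
  refine ⟨g.smooth n, 2 ^ 2 * (Finset.Iic (2, n)).sup (fun m => SchwartzMap.seminorm ℝ m.1 m.2) g,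
    fun k hk x => ?_⟩
  have h := g.one_add_le_sup_seminorm_apply (𝕜 := ℝ) (m := (2, n)) le_rfl hk x
  dsimp only at h
  rw [norm_iteratedFDeriv_eq_norm_iteratedDeriv, Real.norm_eq_abs] at h
  rw [← div_eq_mul_inv, le_div_iff₀ (by positivity)]
  refine le_trans ?_ h
  rw [mul_comm]
  gcongr
  nlinarith [abs_nonneg x, sq_abs x]

section OscillatoryIntegral

variable {s w : ℝ → ℝ} {h : ℝ → ℂ}

theorem norm_cexp_two_pi_I_mul (t y : ℝ) :
    ‖Complex.exp (2 * π * Complex.I * t * y)‖ = 1 := by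
  rw [Complex.norm_exp]
  simp

theorem hasDerivAt_cexp_two_pi_I_mul (t : ℝ) {x : ℝ} (hs : DifferentiableAt ℝ s x) :
    HasDerivAt (fun x => Complex.exp (2 * π * Complex.I * t * s x))
      (Complex.exp (2 * π * Complex.I * t * s x) * (2 * π * Complex.I * t * deriv s x)) x :=
  (hs.hasDerivAt.ofReal_comp.const_mul (2 * π * Complex.I * t)).cexp

theorem integrable_mul_cexp (hw : Integrable w) (hh : ContDiffDominated 0 w h)
    (hs : Continuous s) (t : ℝ) :
    Integrable fun x => h x * Complex.exp (2 * π * Complex.I * t * s x) := by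
  obtain ⟨C, hC⟩ := hh.norm_le
  refine (hw.const_mul C).mono' (hh.1.continuous.mul (by fun_prop)).aestronglyMeasurable
    (.of_forall fun x => ?_)
  rw [norm_mul, norm_cexp_two_pi_I_mul, mul_one]
  exact hC x

theorem norm_integral_mul_cexp_le {C : ℝ} (hw : Integrable w) (hC : ∀ x, ‖h x‖ ≤ C * w x)
    (t : ℝ) : ‖∫ x, h x * Complex.exp (2 * π * Complex.I * t * s x)‖ ≤ C * ∫ x, w x := by
  rw [← integral_const_mul]
  refine norm_integral_le_of_norm_le (hw.const_mul C) (.of_forall fun x => ?_)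
  rw [norm_mul, norm_cexp_two_pi_I_mul, mul_one]
  exact hC x

theorem two_pi_I_mul_integral_mul_cexp (hs : Differentiable ℝ s) (hs₀ : ∀ x, deriv s x ≠ 0)
    (hw : Integrable w) (hh : ContDiffDominated 0 w h)
    (hqh : ContDiffDominated 1 w fun x => (deriv s x)⁻¹ • h x) (t : ℝ) :
    2 * π * Complex.I * t * ∫ x, h x * Complex.exp (2 * π * Complex.I * t * s x) =
      -∫ x, deriv (fun x => (deriv s x)⁻¹ • h x) x *
        Complex.exp (2 * π * Complex.I * t * s x) := by
  set u := fun x => (deriv s x)⁻¹ • h x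
  set e := fun x => Complex.exp (2 * π * Complex.I * t * s x)
  have hu : ∀ x, HasDerivAt u (deriv u x) x := fun x =>
    (hqh.1.differentiable one_ne_zero x).hasDerivAt
  have he : ∀ x, HasDerivAt e (e x * (2 * π * Complex.I * t * deriv s x)) x := fun x =>
    hasDerivAt_cexp_two_pi_I_mul t (hs x)
  have huv' : ∀ x, u x * (e x * (2 * π * Complex.I * t * deriv s x)) =
      2 * π * Complex.I * t * (h x * e x) := fun x => by
    simp only [u, Complex.real_smul, Complex.ofReal_inv]
    field_simp [Complex.ofReal_ne_zero.2 (hs₀ x)]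
  have hhe := integrable_mul_cexp hw hh hs.continuous t
  calc 2 * π * Complex.I * t * ∫ x, h x * e x
      = ∫ x, u x * (e x * (2 * π * Complex.I * t * deriv s x)) := by
        simp only [huv', integral_const_mul]
    _ = -∫ x, deriv u x * e x :=
        integral_mul_deriv_eq_deriv_mul_of_integrable (fun x _ => hu x) (fun x _ => he x)
          (by simpa only [Pi.mul_def, huv'] using hhe.const_mul (2 * π * Complex.I * t))
          (integrable_mul_cexp hw hqh.deriv hs.continuous t)
          (integrable_mul_cexp hw (hqh.mono zero_le_one) hs.continuous t)

theorem norm_integral_mul_cexp_le_rpow {n : ℕ} (hs : Differentiable ℝ s)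
    (hs₀ : ∀ x, deriv s x ≠ 0) (hq : ContDiffDominated n 1 fun x => (deriv s x)⁻¹)
    (hw : Integrable w) (hh : ContDiffDominated n w h) :
    ∃ C : ℝ, ∀ t : ℝ, 0 < t →
      ‖∫ x, h x * Complex.exp (2 * π * Complex.I * t * s x)‖ ≤ C * t ^ (-(n : ℝ)) := by
  induction n generalizing h with
  | zero =>
    obtain ⟨C, hC⟩ := hh.norm_le
    exact ⟨C * ∫ x, w x, fun t _ => by simpa using norm_integral_mul_cexp_le hw hC t⟩
  | succ n ih =>
    have hqh : ContDiffDominated (n + 1) w fun x => (deriv s x)⁻¹ • h x := by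
      simpa using hq.smul hh
    obtain ⟨C, hC⟩ := ih (hq.mono n.le_succ) hqh.deriv
    refine ⟨C / (2 * π), fun t ht => ?_⟩
    have hibp := congrArg norm <|
      two_pi_I_mul_integral_mul_cexp hs hs₀ hw (hh.mono (n + 1).zero_le) (hqh.mono (by omega)) t
    have hnorm : ‖2 * π * Complex.I * t‖ = 2 * π * t := by
      simp [abs_of_pos ht, abs_of_pos pi_pos]
    rw [norm_mul, norm_neg, hnorm] at hibp
    calc ‖∫ x, h x * Complex.exp (2 * π * Complex.I * t * s x)‖
        = ‖∫ x, deriv (fun x => (deriv s x)⁻¹ • h x) x *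
            Complex.exp (2 * π * Complex.I * t * s x)‖ / (2 * π * t) := by
          rw [← hibp]; field_simp
      _ ≤ C * t ^ (-(n : ℝ)) / (2 * π * t) := by gcongr; exact hC t ht
      _ = C / (2 * π) * t ^ (-((n + 1 : ℕ) : ℝ)) := by
          rw [Nat.cast_succ, neg_add, rpow_add ht, rpow_neg_one]
          field_simp

end OscillatoryIntegral

theorem nonstationary_phase_decay_general
    (l : ℕ) (δ M : ℝ) (hδ : 0 < δ)
    (s : ℝ → ℝ) (hs : ContDiff ℝ (l + 1) s)
    (hs' : ∀ ξ : ℝ, δ ≤ deriv s ξ)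
    (hsk : ∀ k : ℕ, 2 ≤ k → k ≤ l + 1 → ∀ ξ : ℝ, |iteratedDeriv k s ξ| ≤ M)
    (g : SchwartzMap ℝ ℂ) :
    ∃ C : ℝ, ∀ t > (0 : ℝ),
      ‖∫ ξ : ℝ, g ξ * Complex.exp (2 * Real.pi * Complex.I * t * s ξ)‖
        ≤ C * t ^ (-(l : ℝ)) := by
  have hq : ContDiffDominated l 1 fun ξ => (deriv s ξ)⁻¹ :=
    contDiffDominated_inv hs.deriv' hδ (fun ξ => (hs' ξ).trans (le_abs_self _))
      fun k hk₁ hk ξ => by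
        simpa only [← iteratedDeriv_succ'] using hsk (k + 1) (by omega) (by omega) ξ
  exact norm_integral_mul_cexp_le_rpow (hs.differentiable (by simp))
    (fun ξ => (hδ.trans_le (hs' ξ)).ne') hq integrable_inv_one_add_sq (g.contDiffDominated l)

/-- Non-stationary phase: if the phase `s` has derivative
bounded below by `δ > 0` and higher derivatives (up to order `l + 1`) bounded
by `M`, then for any Schwartz amplitude `g` the oscillatory integral
`∫ g(ξ) e^{2πi t s(ξ)} dξ` decays like `t^{-l}`. -/
theorem nonstationary_phase_decay
    (l : ℕ) (δ M : ℝ) (hδ : 0 < δ) (hM : 0 < M)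
    (s : ℝ → ℝ) (hs : ContDiff ℝ (l + 1) s)
    (hs' : ∀ ξ : ℝ, δ ≤ deriv s ξ)
    (hsk : ∀ k : ℕ, 2 ≤ k → k ≤ l + 1 → ∀ ξ : ℝ, |iteratedDeriv k s ξ| ≤ M)
    (g : SchwartzMap ℝ ℂ) :
    ∃ C : ℝ, ∀ t > (0 : ℝ),
      ‖∫ ξ : ℝ, g ξ * Complex.exp (2 * Real.pi * Complex.I * t * s ξ)‖
        ≤ C * t ^ (-(l : ℝ)) :=
  nonstationary_phase_decay_general l δ M hδ s hs hs' hsk g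
end

section
/- Let u : ℂ → ℝ be harmonic on all of ℂ (identified with ℝ²) with u(0) = 0, and suppose there are constants a, b, d ≥ 0 such that for every R ≥ 2 the circle average satisfies (2πR)⁻¹ · ∫_{|ξ|=R} |u(ξ)| ds ≤ (a·R + b·log R + d)². Then u is a polynomial of degree at most 2 in the real coordinates: there exist real numbers c₁, c₂, c₃, c₄, c₅ such that u(x + iy) = c₁·x + c₂·y + c₃·x² + c₄·x·y + c₅·y² for all x, y ∈ ℝ. -/
open MeasureTheory Real

/-!
Write `u = Re F` with `F` entire. On the circle `|z| = R` one has `conj z = R² / z`, so for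
`n ≥ 1` the circle average of `u(z) · (conj z)ⁿ` is `R²ⁿ cₙ / 2`, where `cₙ` is the `n`-th Taylor
coefficient of `F`; the conjugate half `conj (F(z) zⁿ)` averages to `0` by the mean value
property. Hence `|cₙ| Rⁿ ≤ 2 · avg_{|z|=R} |u| = O(R²)`, which forces `cₙ = 0` for `n ≥ 3`.
-/

open Complex Metric Filter Asymptotics Topology
open scoped Nat ComplexConjugate

theorem norm_circleAverage_le {E : Type*} [NormedAddCommGroup E] [NormedSpace ℝ E]
    (f : ℂ → E) (c : ℂ) (R : ℝ) :
    ‖Real.circleAverage f c R‖ ≤ Real.circleAverage (fun z ↦ ‖f z‖) c R := by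
  rw [circleAverage, circleAverage, norm_smul, smul_eq_mul, Real.norm_of_nonneg (by positivity)]
  gcongr
  exact intervalIntegral.norm_integral_le_integral_norm two_pi_pos.le

variable {F : ℂ → ℂ} {R : ℝ}

theorem DiffContOnCl.circleAverage_mul_inv_pow (hF : DiffContOnCl ℂ F (ball 0 R)) (hR : 0 < R)
    (n : ℕ) : Real.circleAverage (fun z ↦ F z * z⁻¹ ^ n) 0 R = iteratedDeriv n F 0 / n ! := by
  rw [circleAverage_eq_circleIntegral hR.ne']
  have := hF.circleIntegral_one_div_sub_center_pow_smul hR n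
  simp only [sub_zero, smul_eq_mul] at this ⊢
  calc (2 * π * I)⁻¹ * ∮ z in C(0, R), z⁻¹ * (F z * z⁻¹ ^ n)
      = (2 * π * I)⁻¹ * ∮ z in C(0, R), 1 / z ^ (n + 1) * F z := by
        congr 1; congr 1; funext z; rw [pow_succ, one_div, mul_inv, inv_pow]; ring
    _ = iteratedDeriv n F 0 / n ! := by
        rw [this]; field_simp [two_pi_I_ne_zero]

theorem DiffContOnCl.circleAverage_mul_pow_eq_zero (hF : DiffContOnCl ℂ F (ball 0 R)) (hR : 0 ≤ R)
    {n : ℕ} (hn : n ≠ 0) : Real.circleAverage (fun z ↦ F z * z ^ n) 0 R = 0 := by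
  have : DiffContOnCl ℂ (fun z ↦ F z * z ^ n) (ball 0 |R|) := by
    rw [abs_of_nonneg hR]
    simpa only [smul_eq_mul, mul_comm] using ((differentiable_pow n).diffContOnCl).smul hF
  rw [this.circleAverage]
  simp [hn]

theorem DiffContOnCl.circleAverage_re_mul_conj_pow (hF : DiffContOnCl ℂ F (ball 0 R)) (hR : 0 < R)
    {n : ℕ} (hn : n ≠ 0) :
    Real.circleAverage (fun z ↦ ((F z).re : ℂ) * conj z ^ n) 0 R
      = R ^ (2 * n) / 2 * (iteratedDeriv n F 0 / n !) := by
  have hFc : ContinuousOn F (sphere 0 R) := hF.continuousOn_ball.mono sphere_subset_closedBall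
  have hz : ∀ z ∈ sphere (0 : ℂ) R, z ≠ 0 := fun z hz ↦ ne_zero_of_mem_sphere hR.ne' ⟨z, hz⟩
  have hint₁ : CircleIntegrable (fun z ↦ F z * z⁻¹ ^ n) 0 R :=
    (hFc.mul ((continuousOn_inv₀.mono hz).pow n)).circleIntegrable hR.le
  have hint₂ : CircleIntegrable (fun z ↦ F z * z ^ n) 0 R :=
    (hFc.mul (continuousOn_pow n)).circleIntegrable hR.le
  have hint₃ : CircleIntegrable (fun z ↦ conj (F z * z ^ n)) 0 R :=
    (continuous_conj.comp_continuousOn (hFc.mul (continuousOn_pow n))).circleIntegrable hR.le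
  have hconj : ∀ z ∈ sphere (0 : ℂ) |R|, conj z = R ^ 2 * z⁻¹ := by
    intro z hz
    rw [abs_of_pos hR, mem_sphere_zero_iff_norm] at hz
    have : z ≠ 0 := by rintro rfl; simp at hz; linarith
    field_simp
    rw [mul_comm, mul_conj, normSq_eq_norm_sq, hz]
    push_cast; ring
  calc Real.circleAverage (fun z ↦ ((F z).re : ℂ) * conj z ^ n) 0 R
      = Real.circleAverage (fun z ↦ ((R : ℂ) ^ (2 * n) / 2) • (F z * z⁻¹ ^ n)
          + (1 / 2 : ℂ) • conj (F z * z ^ n)) 0 R := by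
        refine circleAverage_congr_sphere fun z hz ↦ ?_
        simp only [re_eq_add_conj, hconj z hz, map_mul, map_pow, smul_eq_mul]
        ring
    _ = ((R : ℂ) ^ (2 * n) / 2) • Real.circleAverage (fun z ↦ F z * z⁻¹ ^ n) 0 R
          + (1 / 2 : ℂ) • conj (Real.circleAverage (fun z ↦ F z * z ^ n) 0 R) := by
        refine (circleAverage_add (hint₁.const_smul (a := (R : ℂ) ^ (2 * n) / 2))
          (hint₃.const_smul (a := (1 / 2 : ℂ)))).trans ?_
        rw [circleAverage_smul, circleAverage_smul]
        congr 2
        exact conjCLE.toContinuousLinearMap.circleAverage_comp_comm hint₂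
    _ = R ^ (2 * n) / 2 * (iteratedDeriv n F 0 / n !) := by
        rw [hF.circleAverage_mul_inv_pow hR, hF.circleAverage_mul_pow_eq_zero hR.le hn]
        simp

theorem DiffContOnCl.norm_iteratedDeriv_div_factorial_le (hF : DiffContOnCl ℂ F (ball 0 R))
    (hR : 0 < R) {n : ℕ} (hn : n ≠ 0) :
    ‖iteratedDeriv n F 0 / (n ! : ℂ)‖
      ≤ 2 * Real.circleAverage (fun z ↦ |(F z).re|) 0 R / R ^ n := by
  have hnorm : Real.circleAverage (fun z ↦ ‖((F z).re : ℂ) * conj z ^ n‖) 0 R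
      = R ^ n * Real.circleAverage (fun z ↦ |(F z).re|) 0 R := by
    rw [← smul_eq_mul, ← circleAverage_fun_smul]
    refine circleAverage_congr_sphere fun z hz ↦ ?_
    rw [abs_of_pos hR, mem_sphere_zero_iff_norm] at hz
    simp [hz, mul_comm]
  have key := norm_circleAverage_le (fun z ↦ ((F z).re : ℂ) * conj z ^ n) 0 R
  rw [hF.circleAverage_re_mul_conj_pow hR hn, hnorm, norm_mul] at key
  rw [le_div_iff₀ (by positivity)]
  have : ‖(R : ℂ) ^ (2 * n) / 2‖ = R ^ n * R ^ n / 2 := by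
    simp [abs_of_pos hR, pow_mul']; ring
  rw [this] at key
  nlinarith [pow_pos hR n]

theorem Differentiable.iteratedDeriv_eq_zero_of_isBigO_circleAverage_abs_re
    (hF : Differentiable ℂ F) {k : ℕ}
    (hgrowth : (fun R ↦ Real.circleAverage (fun z ↦ |(F z).re|) 0 R) =O[atTop] (· ^ k))
    {n : ℕ} (hkn : k < n) : iteratedDeriv n F 0 = 0 := by
  have hlim : Tendsto (fun R ↦ 2 * Real.circleAverage (fun z ↦ |(F z).re|) 0 R / R ^ n) atTop
      (𝓝 0) := by
    have hlo := hgrowth.trans_isLittleO (isLittleO_pow_pow_atTop_of_lt hkn)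
    simpa [mul_div_assoc] using hlo.tendsto_div_nhds_zero.const_mul 2
  have hle : ∀ᶠ R in atTop, ‖iteratedDeriv n F 0 / (n ! : ℂ)‖
      ≤ 2 * Real.circleAverage (fun z ↦ |(F z).re|) 0 R / R ^ n :=
    (eventually_gt_atTop 0).mono fun R hR ↦
      hF.diffContOnCl.norm_iteratedDeriv_div_factorial_le hR (by omega)
  have := norm_le_zero_iff.mp (ge_of_tendsto hlim hle)
  simpa [Nat.factorial_ne_zero] using this

theorem Differentiable.eq_sum_range_of_isBigO_circleAverage_abs_re
    (hF : Differentiable ℂ F) {k : ℕ}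
    (hgrowth : (fun R ↦ Real.circleAverage (fun z ↦ |(F z).re|) 0 R) =O[atTop] (· ^ k))
    (z : ℂ) : F z = ∑ n ∈ Finset.range (k + 1), iteratedDeriv n F 0 / n ! * z ^ n := by
  rw [← taylorSeries_eq_of_entire' (c := 0) (z := z) hF,
    tsum_eq_sum (s := Finset.range (k + 1))]
  · simp only [sub_zero, div_eq_inv_mul]
  · intro n hn
    rw [hF.iteratedDeriv_eq_zero_of_isBigO_circleAverage_abs_re hgrowth
      (by simpa using hn), mul_zero, zero_mul]

theorem circleAverage_zero_eq_inv_mul_integral {f : ℂ → ℝ} (hR : R ≠ 0) :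
    Real.circleAverage f 0 R
      = (2 * π * R)⁻¹ * ∫ θ in (0 : ℝ)..(2 * π), f (R * Complex.exp (θ * I)) * R := by
  rw [circleAverage_def, intervalIntegral.integral_mul_const, smul_eq_mul]
  simp only [circleMap_zero]
  generalize ∫ θ in (0 : ℝ)..(2 * π), f (R * Complex.exp (θ * I)) = J
  field_simp

theorem isBigO_circleAverage_abs_of_le_sq {u : ℂ → ℝ} {a b d : ℝ}
    (havg : ∀ R : ℝ, 2 ≤ R →
      (2 * π * R)⁻¹ * ∫ θ in (0 : ℝ)..(2 * π), |u (R * Complex.exp (θ * I))| * R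
        ≤ (a * R + b * Real.log R + d) ^ 2) :
    (fun R ↦ Real.circleAverage (fun z ↦ |u z|) 0 R) =O[atTop] (· ^ 2) := by
  have hlin : (fun R ↦ a * R + b * Real.log R + d) =O[atTop] id :=
    (((isBigO_refl id atTop).const_mul_left a).add
      (isLittleO_log_id_atTop.isBigO.const_mul_left b)).add (isLittleO_const_id_atTop d).isBigO
  refine IsBigO.trans (IsBigO.of_bound 1 ?_) (hlin.pow 2)
  filter_upwards [eventually_ge_atTop 2] with R hR
  rw [Real.norm_of_nonneg (circleAverage_nonneg_of_nonneg fun _ _ ↦ abs_nonneg _),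
    circleAverage_zero_eq_inv_mul_integral (by positivity), one_mul]
  exact (havg R hR).trans (le_abs_self _)

theorem harmonicOnNhd_univ_of_iteratedFDeriv {u : ℂ → ℝ} (hu : ContDiff ℝ 2 u)
    (hharm : ∀ z, iteratedFDeriv ℝ 2 u z ![1, 1] + iteratedFDeriv ℝ 2 u z ![I, I] = 0) :
    InnerProductSpace.HarmonicOnNhd u Set.univ := fun z _ ↦
  ⟨hu.contDiffAt, .of_forall fun w ↦ by
    simpa [InnerProductSpace.laplacian_eq_iteratedFDeriv_complexPlane] using hharm w⟩

theorem harmonic_quadratic_growth_is_quadratic_polynomial_general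
    (u : ℂ → ℝ) (hu : ContDiff ℝ 2 u)
    (hharm : ∀ z : ℂ,
      iteratedFDeriv ℝ 2 u z ![1, 1] + iteratedFDeriv ℝ 2 u z ![Complex.I, Complex.I] = 0)
    (h0 : u 0 = 0)
    (a b d : ℝ)
    (havg : ∀ R : ℝ, 2 ≤ R →
      (2 * Real.pi * R)⁻¹ *
          ∫ θ in (0 : ℝ)..(2 * Real.pi), |u (R * Complex.exp (θ * Complex.I))| * R
        ≤ (a * R + b * Real.log R + d) ^ 2) :
    ∃ c₁ c₂ c₃ c₄ c₅ : ℝ, ∀ x y : ℝ,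
      u (x + y * Complex.I)
        = c₁ * x + c₂ * y + c₃ * x ^ 2 + c₄ * x * y + c₅ * y ^ 2 := by
  obtain ⟨F, hFan, hFre⟩ :=
    (harmonicOnNhd_univ_of_iteratedFDeriv hu hharm).exists_analyticOnNhd_univ_re_eq
  have hre : ∀ z, (F z).re = u z := congrFun hFre
  have hF : Differentiable ℂ F := differentiableOn_univ.mp hFan.differentiableOn
  have hgrowth : (fun R ↦ Real.circleAverage (fun z ↦ |(F z).re|) 0 R) =O[atTop] (· ^ 2) := by
    simpa only [hre] using isBigO_circleAverage_abs_of_le_sq havg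
  obtain ⟨p, hp⟩ : ∃ p : ℕ → ℂ, ∀ z, F z = ∑ n ∈ Finset.range 3, p n * z ^ n :=
    ⟨_, hF.eq_sum_range_of_isBigO_circleAverage_abs_re hgrowth⟩
  have hp0 : (p 0).re = 0 := by
    simpa [hp, Finset.sum_range_succ, h0] using hre 0
  refine ⟨(p 1).re, -(p 1).im, (p 2).re, -2 * (p 2).im, -(p 2).re, fun x y ↦ ?_⟩
  rw [← hre, hp]
  simp [Finset.sum_range_succ, hp0, pow_two]
  ring

/-- A harmonic function on `ℂ ≅ ℝ²` vanishing at the origin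
whose circle averages of `|u|` grow at most like `(aR + b log R + d)²` is a
polynomial of degree at most 2 in the real coordinates. -/
theorem harmonic_quadratic_growth_is_quadratic_polynomial
    (u : ℂ → ℝ) (hu : ContDiff ℝ 2 u)
    (hharm : ∀ z : ℂ,
      iteratedFDeriv ℝ 2 u z ![1, 1] + iteratedFDeriv ℝ 2 u z ![Complex.I, Complex.I] = 0)
    (h0 : u 0 = 0)
    (a b d : ℝ) (ha : 0 ≤ a) (hb : 0 ≤ b) (hd : 0 ≤ d)
    (havg : ∀ R : ℝ, 2 ≤ R →
      (2 * Real.pi * R)⁻¹ *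
          ∫ θ in (0 : ℝ)..(2 * Real.pi), |u (R * Complex.exp (θ * Complex.I))| * R
        ≤ (a * R + b * Real.log R + d) ^ 2) :
    ∃ c₁ c₂ c₃ c₄ c₅ : ℝ, ∀ x y : ℝ,
      u (x + y * Complex.I)
        = c₁ * x + c₂ * y + c₃ * x ^ 2 + c₄ * x * y + c₅ * y ^ 2 :=
  harmonic_quadratic_growth_is_quadratic_polynomial_general u hu hharm h0 a b d havg
end

section
/- Let ν ∈ L¹(ℝ, ℂ). Suppose that for every Schwartz function χ ∈ 𝓢(ℝ, ℂ) the quantity ∫ (ν ⋆ χ)(x) · conj(χ(x)) dx is a nonnegative real number, where (ν ⋆ χ)(x) = ∫ ν(x−y)·χ(y) dy. Then the Fourier transform (𝓕ν)(ξ) = ∫ ν(x)·e^(−2πiξx) dx is a nonnegative real number for every ξ ∈ ℝ. -/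
/-!
Test positivity against the modulated dilates `χ_R(x) = e^{2πiξx} g(x/R)` of a fixed bump `g`.
By Fubini, `∫ (ν ⋆ χ_R) conj χ_R = R ∫ ν(u) e^{-2πiξu} A(u/R) du`, where
`A(u) = ∫ g(x - u) conj (g x) dx` is the autocorrelation of `g`. Dividing by `R` and letting
`R → ∞`, dominated convergence gives `A(0) 𝓕ν(ξ) ≥ 0`, and `A(0) = ‖g‖₂² > 0`.
"Real and nonnegative" is `0 ≤ z` in `ComplexOrder`, a closed order, so it survives the limit.
-/

open MeasureTheory FourierTransform Filter Topology Complex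
open scoped ComplexOrder ComplexConjugate ContDiff Convolution

theorem Complex.nonneg_of_mul_nonneg_right {a z : ℂ} (h : 0 ≤ a * z) (ha : 0 < a) : 0 ≤ z := by
  obtain ⟨hre, him⟩ := pos_iff.1 ha
  have ha_real : a = (a.re : ℂ) := ext rfl (by simp [← him])
  have hz : z = ((a.re⁻¹ : ℝ) : ℂ) * (a * z) := by
    rw [← mul_assoc, ha_real, ← ofReal_mul, ofReal_re, inv_mul_cancel₀ hre.ne', ofReal_one,
      one_mul]
  rw [hz]
  exact mul_nonneg (zero_le_real.2 (inv_nonneg.2 hre.le)) h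

section Autocorrelation

variable {G : Type*} [NormedAddCommGroup G] [MeasurableSpace G] {μ : Measure G}

noncomputable def autocorrelation (μ : Measure G) (g : G → ℂ) (u : G) : ℂ :=
  ∫ x, g (x - u) * conj (g x) ∂μ

theorem autocorrelation_eq_convolution (g : G → ℂ) :
    autocorrelation μ g =
      (fun x => conj (g x)) ⋆[ContinuousLinearMap.mul ℂ ℂ, μ] fun x => g (-x) := by
  ext u
  simp only [autocorrelation, convolution, ContinuousLinearMap.mul_apply', neg_sub, mul_comm]

theorem autocorrelation_addChar_mul (e : AddChar G Circle) (g : G → ℂ) (u : G) :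
    autocorrelation μ (fun x => e x * g x) u = e (-u) * autocorrelation μ g u := by
  rw [autocorrelation, autocorrelation, ← integral_const_mul]
  congr 1; ext x
  have : (e (x - u) : ℂ) * conj (e x : ℂ) = e (-u) := by
    rw [← Circle.coe_inv_eq_conj, ← Circle.coe_mul, ← AddChar.map_neg_eq_inv,
      ← AddChar.map_add_eq_mul]
    congr 2
    abel
  rw [map_mul, ← this]
  ring

theorem hasCompactSupport_autocorrelation {g : G → ℂ}
    (hgs : HasCompactSupport g) : HasCompactSupport (autocorrelation μ g) := by
  rw [autocorrelation_eq_convolution]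
  exact (hgs.comp_left (g := starRingEnd ℂ) (map_zero _)).convolution _
    (hgs.comp_homeomorph (Homeomorph.neg G))

variable [BorelSpace G]

theorem continuous_autocorrelation [IsLocallyFiniteMeasure μ]
    {g : G → ℂ} (hg : Continuous g) (hgs : HasCompactSupport g) :
    Continuous (autocorrelation μ g) := by
  rw [autocorrelation_eq_convolution]
  exact (hgs.comp_homeomorph (Homeomorph.neg G)).continuous_convolution_right _
    (continuous_conj.comp hg).locallyIntegrable (hg.comp continuous_neg)

theorem autocorrelation_zero_pos [μ.IsOpenPosMeasure] [IsFiniteMeasureOnCompacts μ]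
    {g : G → ℂ} (hg : Continuous g) (hgs : HasCompactSupport g) {x₀ : G} (hx₀ : g x₀ ≠ 0) :
    0 < autocorrelation μ g 0 := by
  have h : autocorrelation μ g 0 = ((∫ x, ‖g x‖ ^ 2 ∂μ : ℝ) : ℂ) := by
    simp only [autocorrelation, sub_zero, mul_conj, normSq_eq_norm_sq]
    exact integral_ofReal
  rw [h, zero_lt_real]
  have hcs : HasCompactSupport fun x => ‖g x‖ ^ 2 :=
    hgs.comp_left (g := fun z : ℂ => ‖z‖ ^ 2) (by simp)
  exact (hg.norm.pow 2).integral_pos_of_hasCompactSupport_nonneg_nonzero hcs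
    (fun x => by positivity) (x := x₀) (by simpa using hx₀)

theorem integral_convolution_mul_conj_eq [SecondCountableTopology G] [SFinite μ]
    [μ.IsAddLeftInvariant] [μ.IsNegInvariant] {ν ψ : G → ℂ}
    (hν : Integrable ν μ) (hψ : Integrable ψ μ) {C : ℝ} (hC : ∀ x, ‖ψ x‖ ≤ C) :
    ∫ x, (∫ y, ν (x - y) * ψ y ∂μ) * conj (ψ x) ∂μ =
      ∫ u, ν u * autocorrelation μ ψ u ∂μ := by
  have hconv : Integrable (fun p : G × G => ν p.2 * ψ (p.1 - p.2)) (μ.prod μ) := by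
    simpa using hν.convolution_integrand (ContinuousLinearMap.mul ℂ ℂ) hψ
  have hint : Integrable (fun p : G × G => ν p.2 * ψ (p.1 - p.2) * conj (ψ p.1)) (μ.prod μ) :=
    hconv.mul_bdd (continuous_conj.comp_aestronglyMeasurable hψ.aestronglyMeasurable.comp_fst)
      (.of_forall fun p => by simpa using hC p.1)
  calc ∫ x, (∫ y, ν (x - y) * ψ y ∂μ) * conj (ψ x) ∂μ
      = ∫ x, ∫ u, ν u * ψ (x - u) * conj (ψ x) ∂μ ∂μ := by
        congr 1; ext x
        rw [← integral_sub_left_eq_self _ μ x, ← integral_mul_const]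
        simp
    _ = ∫ u, ∫ x, ν u * ψ (x - u) * conj (ψ x) ∂μ ∂μ := integral_integral_swap hint
    _ = ∫ u, ν u * autocorrelation μ ψ u ∂μ := by
        simp only [mul_assoc, integral_const_mul, autocorrelation]

end Autocorrelation

theorem autocorrelation_comp_div (g : ℝ → ℂ) (R u : ℝ) :
    autocorrelation volume (fun x => g (x / R)) u = |R| * autocorrelation volume g (u / R) := by
  simp only [autocorrelation, sub_div]
  exact Measure.integral_comp_div (fun t => g (t - u / R) * conj (g t)) R

theorem contDiff_fourierChar : ContDiff ℝ ∞ fun x : ℝ => (𝐞 x : ℂ) := by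
  simp only [Real.fourierChar_apply]
  exact contDiff_exp.comp
    ((ofRealCLM.contDiff.comp (contDiff_const.mul contDiff_id)).mul contDiff_const)

theorem tendsto_integral_comp_div_mul_atTop {f B : ℝ → ℂ} (hf : Integrable f)
    (hB : Continuous B) {C : ℝ} (hC : ∀ x, ‖B x‖ ≤ C) :
    Tendsto (fun R => ∫ u, B (u / R) * f u) atTop (𝓝 (B 0 * ∫ u, f u)) := by
  rw [← integral_const_mul]
  refine tendsto_integral_filter_of_dominated_convergence (fun u => C * ‖f u‖)
    (.of_forall fun R => ((hB.comp (continuous_id.div_const R)).aestronglyMeasurable.mul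
      hf.aestronglyMeasurable))
    (.of_forall fun R => .of_forall fun u => ?_) (hf.norm.const_mul C) (.of_forall fun u => ?_)
  · rw [norm_mul]
    exact mul_le_mul_of_nonneg_right (hC _) (norm_nonneg _)
  · have : Tendsto (fun R : ℝ => u / R) atTop (𝓝 0) := tendsto_const_nhds.div_atTop tendsto_id
    exact ((hB.tendsto 0).comp this).mul_const (f u)

theorem integral_autocorrelation_comp_div_mul_fourierChar_smul_nonneg {ν : ℝ → ℂ}
    (hν : Integrable ν)
    (hpos : ∀ χ : SchwartzMap ℝ ℂ, 0 ≤ ∫ x, (∫ y, ν (x - y) * χ y) * conj (χ x))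
    {g : ℝ → ℂ} (hg : ContDiff ℝ ∞ g) (hgs : HasCompactSupport g) (ξ : ℝ) {R : ℝ}
    (hR : R ≠ 0) :
    0 ≤ ∫ u, autocorrelation volume g (u / R) * (𝐞 (-(u * ξ)) • ν u) := by
  set ψ : ℝ → ℂ := fun x => 𝐞.mulShift ξ x * g (x / R)
  have hψ : ContDiff ℝ ∞ ψ :=
    (contDiff_fourierChar.comp (contDiff_const.mul contDiff_id)).mul
      (hg.comp (contDiff_id.div_const R))
  have hψs : HasCompactSupport ψ :=
    (hgs.comp_homeomorph (Homeomorph.mulRight₀ R⁻¹ (inv_ne_zero hR))).mul_left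
  obtain ⟨C, hC⟩ := hψ.continuous.bounded_above_of_compact_support hψs
  have h := hpos (hψs.toSchwartzMap hψ)
  simp only [HasCompactSupport.toSchwartzMap_toFun] at h
  rw [integral_convolution_mul_conj_eq hν (hψ.continuous.integrable_of_hasCompactSupport hψs) hC]
    at h
  simp only [ψ, autocorrelation_addChar_mul, autocorrelation_comp_div] at h
  have hfactor : ∫ u, ν u * (𝐞.mulShift ξ (-u) * (|R| * autocorrelation volume g (u / R))) =
      |R| * ∫ u, autocorrelation volume g (u / R) * (𝐞 (-(u * ξ)) • ν u) := by
    rw [← integral_const_mul]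
    congr 1; ext u
    simp only [AddChar.mulShift_apply, Circle.smul_def, smul_eq_mul, mul_neg, mul_comm ξ u]
    ring
  rw [hfactor] at h
  exact Complex.nonneg_of_mul_nonneg_right h (zero_lt_real.2 (abs_pos.2 hR))

/-- If convolution with `ν ∈ L¹(ℝ, ℂ)` is a positive operator
in the sense that `∫ (ν ⋆ χ) conj χ ≥ 0` for every Schwartz function `χ`, then
the Fourier transform of `ν` is real and nonnegative everywhere. -/
theorem fourierIntegral_nonneg_of_positive_convolution
    (ν : ℝ → ℂ) (hν : Integrable ν)
    (hpos : ∀ χ : SchwartzMap ℝ ℂ,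
      (∫ x : ℝ, (∫ y : ℝ, ν (x - y) * χ y) * (starRingEnd ℂ) (χ x)).im = 0 ∧
      0 ≤ (∫ x : ℝ, (∫ y : ℝ, ν (x - y) * χ y) * (starRingEnd ℂ) (χ x)).re) :
    ∀ ξ : ℝ, (𝓕 ν ξ).im = 0 ∧ 0 ≤ (𝓕 ν ξ).re := by
  intro ξ
  have hpos' (χ : SchwartzMap ℝ ℂ) : 0 ≤ ∫ x, (∫ y, ν (x - y) * χ y) * conj (χ x) :=
    nonneg_iff.2 ⟨(hpos χ).2, (hpos χ).1.symm⟩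
  let b : ContDiffBump (0 : ℝ) := ⟨1, 2, one_pos, one_lt_two⟩
  let g : ℝ → ℂ := fun x => b x
  have hg : ContDiff ℝ ∞ g := ofRealCLM.contDiff.comp b.contDiff
  have hgs : HasCompactSupport g := b.hasCompactSupport.comp_left ofReal_zero
  have hg0 : g 0 ≠ 0 := by simp [g, b.one_of_mem_closedBall, b.rIn_pos.le]
  have hA := continuous_autocorrelation (μ := volume) hg.continuous hgs
  obtain ⟨C, hC⟩ := hA.bounded_above_of_compact_support (hasCompactSupport_autocorrelation hgs)
  have hF : Integrable fun u : ℝ => 𝐞 (-(u * ξ)) • ν u := by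
    simpa [mul_comm] using (Real.fourierIntegral_convergent_iff ξ).2 hν
  have hlim := tendsto_integral_comp_div_mul_atTop hF hA hC
  rw [← Real.fourier_real_eq] at hlim
  have h0 : 0 ≤ autocorrelation volume g 0 * 𝓕 ν ξ :=
    ge_of_tendsto hlim ((eventually_gt_atTop 0).mono fun R hR =>
      integral_autocorrelation_comp_div_mul_fourierChar_smul_nonneg hν hpos' hg hgs ξ hR.ne')
  obtain ⟨hre, him⟩ := nonneg_iff.1
    (Complex.nonneg_of_mul_nonneg_right h0 (autocorrelation_zero_pos hg.continuous hgs hg0))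
  exact ⟨him.symm, hre⟩
end

section
/- For every nonzero complex number q, max(|q|, |q|⁻¹) ≤ max(√2, 2·|q + q⁻¹|). -/
/-!
By the reverse triangle inequality `‖q + q⁻¹‖ ≥ |r - r⁻¹|` with `r = ‖q‖`, so the claim reduces to
the real line. There, if `t = max r r⁻¹` exceeds `√2`, then `t² ≥ 2` gives `t ≤ 2 (t - t⁻¹)`, and
`t - t⁻¹ = |r - r⁻¹|`.
-/

lemma abs_norm_sub_norm_inv_le_norm_add_inv {α : Type*} [NormedDivisionRing α] (x : α) :
    |‖x‖ - ‖x‖⁻¹| ≤ ‖x + x⁻¹‖ := by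
  simpa only [norm_neg, norm_inv, sub_neg_eq_add] using abs_norm_sub_norm_le x (-x⁻¹)

lemma le_two_mul_sub_inv_of_sqrt_two_le {t : ℝ} (ht : √2 ≤ t) : t ≤ 2 * (t - t⁻¹) := by
  have ht₀ : 0 < t := (Real.sqrt_pos.2 two_pos).trans_le ht
  have ht₂ : 2 ≤ t ^ 2 := (Real.sqrt_le_iff.1 ht).2
  have : 2 * (t - t⁻¹) - t = (t ^ 2 - 2) / t := by field_simp; ring
  rw [← sub_nonneg, this]
  exact div_nonneg (sub_nonneg.2 ht₂) ht₀.le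

lemma max_self_inv_le_max_sqrt_two_two_mul_abs_sub_inv (r : ℝ) :
    max r r⁻¹ ≤ max √2 (2 * |r - r⁻¹|) := by
  have key {t : ℝ} (ht : √2 ≤ t) : t ≤ 2 * |t - t⁻¹| :=
    (le_two_mul_sub_inv_of_sqrt_two_le ht).trans (by gcongr; exact le_abs_self _)
  rcases le_or_gt (max r r⁻¹) √2 with hle | hlt
  · exact le_max_of_le_left hle
  refine le_max_of_le_right ?_
  rcases max_choice r r⁻¹ with hmax | hmax <;> rw [hmax] at hlt ⊢
  · exact key hlt.le
  · simpa only [inv_inv, abs_sub_comm] using key hlt.le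

theorem max_abs_le_of_sum_with_inv_general (q : ℂ) :
    max ‖q‖ ‖q‖⁻¹
      ≤ max (Real.sqrt 2) (2 * ‖q + q⁻¹‖) :=
  (max_self_inv_le_max_sqrt_two_two_mul_abs_sub_inv ‖q‖).trans <|
    max_le_max le_rfl <| by gcongr; exact abs_norm_sub_norm_inv_le_norm_add_inv q

/-- For every nonzero complex `q`,
`max(|q|, |q|⁻¹) ≤ max(√2, 2|q + q⁻¹|)`. -/
theorem max_abs_le_of_sum_with_inv (q : ℂ) (hq : q ≠ 0) :
    max ‖q‖ ‖q‖⁻¹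
      ≤ max (Real.sqrt 2) (2 * ‖q + q⁻¹‖) :=
  max_abs_le_of_sum_with_inv_general q
end
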